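/- arXiv:2112.04416 — 2 statements merged into one kernel-verified Lean document; each statement's English description precedes it below -/
import Mathlib

section
/- The periodicity function of the period-doubling word admits the following linear representation: let v = [1,0,0,0,0,0] (a 1×6 integer row vector), w = [1,1,1,1,1,1]ᵀ (a 6×1 integer column vector), and let M₀ and M₁ be the 6×6 integer matrices M₀ = [[1,0,0,0,0,0],[0,0,0,1,0,1],[0,0,0,0,0,2],[0,0,0,0,1,0],[0,0,0,1,0,1],[0,0,0,0,0,0]] and M₁ = [[0,1,1,0,0,0],[0,0,0,0,1,0],[0,0,0,0,0,0],[0,1,1,0,0,0],[0,1,1,0,0,0],[0,0,2,0,0,0]]. Then for every i ≥ 1 with binary representation i_{ℓ−1} i_{ℓ−2} ⋯ i_0 (most significant digit first), p_pd(i) = v · M_{i_{ℓ−1}} M_{i_{ℓ−2}} ⋯ M_{i_0} · w. -/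
open Finset Filter Asymptotics

/-- `n` is a local period of the infinite word `w` at position `i`:
`n ≥ 1` and either (`n ≤ i` and `w_{i+k} = w_{i-n+k}` for all `k < n`)
or (`n > i` and `w_k = w_{n+k}` for all `k < i`). -/
def IsLocalPeriodAt {α : Type*} (w : ℕ → α) (i n : ℕ) : Prop :=
  1 ≤ n ∧ ((n ≤ i ∧ ∀ k < n, w (i + k) = w (i - n + k)) ∨
           (i < n ∧ ∀ k < i, w k = w (n + k)))

/-- The periodicity function `p_w(i)`: the least local period of `w` at `i`. -/
noncomputable def perFn {α : Type*} (w : ℕ → α) (i : ℕ) : ℕ :=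
  sInf {n | IsLocalPeriodAt w i n}

/-- The summatory function `P_w(n) = ∑_{j<n} p_w(j)`. -/
noncomputable def sumFn {α : Type*} (w : ℕ → α) (n : ℕ) : ℕ :=
  ∑ j ∈ Finset.range n, perFn w j

/-- The periodic complexity `h_w(n) = P_w(n)/n`. -/
noncomputable def perComplexity {α : Type*} (w : ℕ → α) (n : ℕ) : ℝ :=
  (sumFn w n : ℝ) / n

/-- The period-doubling word: `pd_i = 1` iff the 2-adic valuation of `i+1` is odd. -/
def pd (i : ℕ) : ℕ :=
  if Odd ((i + 1).factorization 2) then 1 else 0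

/-- The matrix product `M_{i_{l-1}} M_{i_{l-2}} ⋯ M_{i_0}` over the binary
representation of `i`, most significant digit first. -/
def digitMatProd (M0 M1 : Matrix (Fin 6) (Fin 6) ℤ) (i : ℕ) : Matrix (Fin 6) (Fin 6) ℤ :=
  (((Nat.digits 2 i).reverse).map (fun d => if d = 1 then M1 else M0)).prod

/-!
Since `pd (2k) = 0` and `pd (2k+1) = 1 - pd k`, a local period `2n` at `2i+b` is the same thing
as a local period `n` at `i`, while at positions `≥ 2` the only odd local period is `1`: an odd
shift matches even positions with odd ones, and two such matches at distance 2 would force two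
consecutive `1`s in `pd`. Hence `p(2m+b) = 1` if `pd` does not change at `2m+b`, and
`p(2m+b) = 2 p(m)` otherwise; whether `pd` changes at `2m+b` depends only on `b`, `pd (m-1)` and
`pd m`. So `p` is computed by a three-state automaton: for `i ≥ 1` the row `v · M(i)` is `e₄` if
`p(i) = 1`, and `e₁ + (p(i) - 1) e₂` resp. `e₃ + (p(i) - 1) e₅` if `pd` changes at `i` to `1`
resp. to `0`; multiplying by `w` reads off `p(i)`.
-/

section LocalPeriod

variable {α : Type*} {w : ℕ → α} {i j n : ℕ}

theorem perFn_le (h : IsLocalPeriodAt w i n) : perFn w i ≤ n :=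
  Nat.sInf_le h

theorem isLocalPeriodAt_perFn (h : IsLocalPeriodAt w i n) : IsLocalPeriodAt w i (perFn w i) :=
  Nat.sInf_mem (s := {n | IsLocalPeriodAt w i n}) ⟨n, h⟩

theorem isLocalPeriodAt_one_iff (hj : 1 ≤ j) : IsLocalPeriodAt w j 1 ↔ w j = w (j - 1) := by
  constructor
  · rintro ⟨-, ⟨-, h⟩ | ⟨h, -⟩⟩
    · simpa using h 0 one_pos
    · omega
  · intro h
    refine ⟨le_rfl, .inl ⟨hj, fun k hk => ?_⟩⟩
    obtain rfl : k = 0 := by omega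
    simpa using h

theorem perFn_eq_one (hj : 1 ≤ j) (h : w j = w (j - 1)) : perFn w j = 1 :=
  have h1 := (isLocalPeriodAt_one_iff hj).2 h
  le_antisymm (perFn_le h1) (isLocalPeriodAt_perFn h1).1

end LocalPeriod

theorem pd_le_one (k : ℕ) : pd k ≤ 1 := by
  unfold pd; split <;> omega

theorem pd_two_mul (k : ℕ) : pd (2 * k) = 0 := by
  simp [pd, Nat.factorization_eq_zero_of_not_dvd (by omega : ¬ 2 ∣ 2 * k + 1)]

theorem pd_two_mul_add_one (k : ℕ) : pd (2 * k + 1) = 1 - pd k := by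
  have h : (2 * k + 1 + 1).factorization 2 = (k + 1).factorization 2 + 1 := by
    rw [show 2 * k + 1 + 1 = 2 * (k + 1) by ring, Nat.factorization_mul two_ne_zero (by omega)]
    simp [Nat.prime_two.factorization_self, add_comm]
  simp only [pd, h, Nat.odd_add_one]
  split_ifs <;> simp_all

theorem pd_zero : pd 0 = 0 :=
  pd_two_mul 0

theorem pd_one : pd 1 = 1 := by
  simpa [pd_zero] using pd_two_mul_add_one 0

theorem pd_eq_zero_or_pd_succ_eq_zero (r : ℕ) : pd r = 0 ∨ pd (r + 1) = 0 := by
  obtain ⟨s, rfl⟩ | ⟨s, rfl⟩ := Nat.even_or_odd r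
  · exact .inl (by rw [← two_mul, pd_two_mul])
  · exact .inr (by rw [show 2 * s + 1 + 1 = 2 * (s + 1) by ring, pd_two_mul])

theorem pd_ne_or_pd_add_two_ne {x y : ℕ} (hx : Even x) (hy : Odd y) :
    pd x ≠ pd y ∨ pd (x + 2) ≠ pd (y + 2) := by
  obtain ⟨s, rfl⟩ := hx
  obtain ⟨r, rfl⟩ := hy
  rw [show 2 * r + 1 + 2 = 2 * (r + 1) + 1 by ring, ← two_mul, show 2 * s + 2 = 2 * (s + 1) by ring,
    pd_two_mul, pd_two_mul, pd_two_mul_add_one, pd_two_mul_add_one]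
  have := pd_eq_zero_or_pd_succ_eq_zero r
  omega

theorem pd_window_iff {a c b L : ℕ} (hb : b ≤ 1) :
    (∀ k < L, pd (2 * a + b + k) = pd (2 * c + b + k)) ↔
      ∀ k < (L + b) / 2, pd (a + k) = pd (c + k) := by
  have hodd (r s : ℕ) : pd (2 * r + 1) = pd (2 * s + 1) ↔ pd r = pd s := by
    have := pd_le_one r; have := pd_le_one s
    rw [pd_two_mul_add_one, pd_two_mul_add_one]; omega
  constructor
  · intro h k hk
    have := h (2 * k + 1 - b) (by omega)
    rwa [show 2 * a + b + (2 * k + 1 - b) = 2 * (a + k) + 1 by omega,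
      show 2 * c + b + (2 * k + 1 - b) = 2 * (c + k) + 1 by omega, hodd] at this
  · intro h k hk
    obtain ⟨j, hj⟩ | ⟨j, hj⟩ := Nat.even_or_odd (b + k)
    · rw [show 2 * a + b + k = 2 * (a + j) by omega, show 2 * c + b + k = 2 * (c + j) by omega,
        pd_two_mul, pd_two_mul]
    · rw [show 2 * a + b + k = 2 * (a + j) + 1 by omega,
        show 2 * c + b + k = 2 * (c + j) + 1 by omega, hodd]
      exact h j (by omega)

theorem pd_two_pow_add (j : ℕ) : ∀ k < 2 ^ j - 1, pd (2 ^ j + k) = pd k := by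
  induction j with
  | zero => intro k hk; simp at hk
  | succ j ih =>
    intro k hk
    have hwin := (pd_window_iff (a := 2 ^ j) (c := 0) (b := 0) (L := 2 ^ (j + 1) - 1)
      zero_le_one).2 (fun k hk => by rw [zero_add]; exact ih k (by rw [pow_succ] at hk; omega)) k hk
    simpa [pow_succ, mul_comm] using hwin

theorem isLocalPeriodAt_pd_two_pow (i : ℕ) : IsLocalPeriodAt pd i (2 ^ (i + 1)) := by
  have hi : i + 1 < 2 ^ (i + 1) := Nat.lt_two_pow_self
  exact ⟨Nat.one_le_two_pow, .inr ⟨by omega, fun k hk => (pd_two_pow_add _ k (by omega)).symm⟩⟩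

theorem isLocalPeriodAt_pd_perFn (i : ℕ) : IsLocalPeriodAt pd i (perFn pd i) :=
  isLocalPeriodAt_perFn (isLocalPeriodAt_pd_two_pow i)

theorem isLocalPeriodAt_pd_two_mul_iff {i n b : ℕ} (hb : b ≤ 1) :
    IsLocalPeriodAt pd (2 * i + b) (2 * n) ↔ IsLocalPeriodAt pd i n := by
  have hle : 2 * n ≤ 2 * i + b ↔ n ≤ i := by omega
  have hlt : 2 * i + b < 2 * n ↔ i < n := by omega
  unfold IsLocalPeriodAt
  rw [hle, hlt]
  refine and_congr (by omega) (or_congr (and_congr_right fun hni => ?_) (and_congr_right' ?_))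
  · rw [show 2 * i + b - 2 * n = 2 * (i - n) + b by omega, pd_window_iff hb,
      show (2 * n + b) / 2 = n by omega]
  · simpa [show (2 * i + b) / 2 = i by omega] using
      pd_window_iff (a := 0) (c := n) (b := 0) (L := 2 * i + b) zero_le_one

theorem not_isLocalPeriodAt_pd_of_odd {j n : ℕ} (hj : 2 ≤ j) (hn : 3 ≤ n) (hodd : Odd n) :
    ¬ IsLocalPeriodAt pd j n := by
  rintro ⟨-, ⟨hnj, h⟩ | ⟨hjn, h⟩⟩
  · have h0 := h 0 (by omega)
    have h2 := h 2 (by omega)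
    rw [show j + 0 = j - n + n by omega, add_zero] at h0
    rw [show j + 2 = j - n + n + 2 by omega] at h2
    obtain he | ho := Nat.even_or_odd (j - n)
    · exact (pd_ne_or_pd_add_two_ne he (he.add_odd hodd)).elim (· h0.symm) (· h2.symm)
    · exact (pd_ne_or_pd_add_two_ne (ho.add_odd hodd) ho).elim (· h0) (· h2)
  · have h1 := h 1 (by omega)
    obtain ⟨r, rfl⟩ := hodd
    rw [pd_one, show 2 * r + 1 + 1 = 2 * (r + 1) by ring, pd_two_mul] at h1
    exact one_ne_zero h1

theorem perFn_pd_two_mul_add {m b : ℕ} (hm : 1 ≤ m) (hb : b ≤ 1)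
    (h : pd (2 * m + b) ≠ pd (2 * m + b - 1)) :
    perFn pd (2 * m + b) = 2 * perFn pd m := by
  refine le_antisymm
    (perFn_le ((isLocalPeriodAt_pd_two_mul_iff hb).2 (isLocalPeriodAt_pd_perFn m))) ?_
  have hper := isLocalPeriodAt_pd_perFn (2 * m + b)
  obtain ⟨n, hn⟩ | hodd := Nat.even_or_odd (perFn pd (2 * m + b))
  · rw [hn, ← two_mul] at hper ⊢
    have := perFn_le ((isLocalPeriodAt_pd_two_mul_iff hb).1 hper)
    omega
  · have hne1 : perFn pd (2 * m + b) ≠ 1 := fun h1 =>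
      h ((isLocalPeriodAt_one_iff (by omega)).1 (h1 ▸ hper))
    have h3 : 3 ≤ perFn pd (2 * m + b) := by
      have := hper.1
      obtain ⟨r, hr⟩ := hodd
      omega
    exact absurd hper (not_isLocalPeriodAt_pd_of_odd (by omega) h3 hodd)

theorem perFn_pd_one : perFn pd 1 = 2 := by
  have h2 : IsLocalPeriodAt pd 1 2 := by
    refine ⟨one_le_two, .inr ⟨one_lt_two, fun k hk => ?_⟩⟩
    obtain rfl : k = 0 := by omega
    exact pd_zero.trans (pd_two_mul 1).symm
  have hper := isLocalPeriodAt_pd_perFn 1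
  have hne1 : perFn pd 1 ≠ 1 := fun h1 => by
    have := (isLocalPeriodAt_one_iff le_rfl).1 (h1 ▸ hper)
    simp [pd_one, pd_zero] at this
  have := hper.1
  have := perFn_le h2
  omega

theorem digitMatProd_two_mul_add (M0 M1 : Matrix (Fin 6) (Fin 6) ℤ) {i b : ℕ} (hb : b ≤ 1)
    (h : 2 * i + b ≠ 0) :
    digitMatProd M0 M1 (2 * i + b) = digitMatProd M0 M1 i * if b = 1 then M1 else M0 := by
  rw [digitMatProd, Nat.digits_def' one_lt_two (Nat.pos_of_ne_zero h),
    show (2 * i + b) % 2 = b by omega, show (2 * i + b) / 2 = i by omega]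
  simp [digitMatProd]

def pdM0 : Matrix (Fin 6) (Fin 6) ℤ :=
  !![1, 0, 0, 0, 0, 0;
     0, 0, 0, 1, 0, 1;
     0, 0, 0, 0, 0, 2;
     0, 0, 0, 0, 1, 0;
     0, 0, 0, 1, 0, 1;
     0, 0, 0, 0, 0, 0]

def pdM1 : Matrix (Fin 6) (Fin 6) ℤ :=
  !![0, 1, 1, 0, 0, 0;
     0, 0, 0, 0, 1, 0;
     0, 0, 0, 0, 0, 0;
     0, 1, 1, 0, 0, 0;
     0, 1, 1, 0, 0, 0;
     0, 0, 2, 0, 0, 0]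

def pdV : Matrix (Fin 1) (Fin 6) ℤ := !![1, 0, 0, 0, 0, 0]

def pdW : Matrix (Fin 6) (Fin 1) ℤ := !![1; 1; 1; 1; 1; 1]

def rowA (t : ℤ) : Matrix (Fin 1) (Fin 6) ℤ := !![0, 1, t, 0, 0, 0]

def rowB (t : ℤ) : Matrix (Fin 1) (Fin 6) ℤ := !![0, 0, 0, 1, 0, t]

def rowC : Matrix (Fin 1) (Fin 6) ℤ := !![0, 0, 0, 0, 1, 0]

theorem pdV_mul_pdM1 : pdV * pdM1 = rowA 1 := by
  ext i j; fin_cases i; fin_cases j <;> simp [pdV, rowA, pdM1, Matrix.mul_apply, Fin.sum_univ_succ]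

theorem rowA_mul_pdM0 (t : ℤ) : rowA t * pdM0 = rowB (2 * t + 1) := by
  ext i j; fin_cases i; fin_cases j <;> simp [rowA, rowB, pdM0, Matrix.mul_apply, Fin.sum_univ_succ]
  ring

theorem rowA_mul_pdM1 (t : ℤ) : rowA t * pdM1 = rowC := by
  ext i j; fin_cases i; fin_cases j <;> simp [rowA, rowC, pdM1, Matrix.mul_apply, Fin.sum_univ_succ]

theorem rowB_mul_pdM0 (t : ℤ) : rowB t * pdM0 = rowC := by
  ext i j; fin_cases i; fin_cases j <;> simp [rowB, rowC, pdM0, Matrix.mul_apply, Fin.sum_univ_succ]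

theorem rowB_mul_pdM1 (t : ℤ) : rowB t * pdM1 = rowA (2 * t + 1) := by
  ext i j; fin_cases i; fin_cases j <;> simp [rowA, rowB, pdM1, Matrix.mul_apply, Fin.sum_univ_succ]
  ring

theorem rowC_mul_pdM0 : rowC * pdM0 = rowB 1 := by
  ext i j; fin_cases i; fin_cases j <;> simp [rowB, rowC, pdM0, Matrix.mul_apply, Fin.sum_univ_succ]

theorem rowC_mul_pdM1 : rowC * pdM1 = rowA 1 := by
  ext i j; fin_cases i; fin_cases j <;> simp [rowA, rowC, pdM1, Matrix.mul_apply, Fin.sum_univ_succ]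

noncomputable def pdRow (i : ℕ) : Matrix (Fin 1) (Fin 6) ℤ :=
  if pd i = pd (i - 1) then rowC
  else if pd i = 1 then rowA (perFn pd i - 1)
  else rowB (perFn pd i - 1)

theorem pdRow_mul_pdW {i : ℕ} (hi : 1 ≤ i) : (pdRow i * pdW) 0 0 = perFn pd i := by
  unfold pdRow
  split_ifs with hC
  · simp [perFn_eq_one hi hC, rowC, pdW, Matrix.mul_apply, Fin.sum_univ_succ]
  · simp [rowA, pdW, Matrix.mul_apply, Fin.sum_univ_succ]
  · simp [rowB, pdW, Matrix.mul_apply, Fin.sum_univ_succ]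

theorem pdRow_one : pdRow 1 = pdV * digitMatProd pdM0 pdM1 1 := by
  have hprod : digitMatProd pdM0 pdM1 1 = pdM1 := by simp [digitMatProd]
  rw [pdRow, if_neg (by rw [pd_one, Nat.sub_self, pd_zero]; decide), if_pos pd_one,
    perFn_pd_one, hprod, pdV_mul_pdM1]
  norm_num

theorem pdRow_two_mul {m : ℕ} (hm : 1 ≤ m) : pdRow (2 * m) = pdRow m * pdM0 := by
  have hcur : pd (2 * m) = 0 := pd_two_mul m
  have hprev : pd (2 * m - 1) = 1 - pd (m - 1) := by
    rw [show 2 * m - 1 = 2 * (m - 1) + 1 by omega, pd_two_mul_add_one]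
  have hcons := pd_eq_zero_or_pd_succ_eq_zero (m - 1)
  rw [Nat.sub_add_cancel hm] at hcons
  have := pd_le_one m; have := pd_le_one (m - 1)
  by_cases h : pd (m - 1) = 1
  · rw [pdRow, pdRow, if_pos (by omega), if_neg (by omega), if_neg (by omega), rowB_mul_pdM0]
  · have hdbl := perFn_pd_two_mul_add (b := 0) hm zero_le_one (by rw [add_zero]; omega)
    rw [add_zero] at hdbl
    rw [pdRow, pdRow, if_neg (by omega), if_neg (by omega), hdbl]
    split_ifs with hC hA
    · rw [rowC_mul_pdM0, perFn_eq_one hm hC]; norm_num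
    · rw [rowA_mul_pdM0]; push_cast; ring_nf
    · omega

theorem pdRow_two_mul_add_one {m : ℕ} (hm : 1 ≤ m) : pdRow (2 * m + 1) = pdRow m * pdM1 := by
  have hcur : pd (2 * m + 1) = 1 - pd m := pd_two_mul_add_one m
  have hprev : pd (2 * m + 1 - 1) = 0 := pd_two_mul m
  have hcons := pd_eq_zero_or_pd_succ_eq_zero (m - 1)
  rw [Nat.sub_add_cancel hm] at hcons
  have := pd_le_one m; have := pd_le_one (m - 1)
  by_cases h : pd m = 1
  · rw [pdRow, pdRow, if_pos (by omega), if_neg (by omega), if_pos h, rowA_mul_pdM1]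
  · have hdbl := perFn_pd_two_mul_add (b := 1) hm le_rfl (by omega)
    rw [pdRow, pdRow, if_neg (by omega), if_pos (by omega), hdbl]
    split_ifs with hC
    · rw [rowC_mul_pdM1, perFn_eq_one hm hC]; norm_num
    · rw [rowB_mul_pdM1]; push_cast; ring_nf

theorem pdRow_eq_pdV_mul_digitMatProd {i : ℕ} (hi : 1 ≤ i) :
    pdRow i = pdV * digitMatProd pdM0 pdM1 i := by
  induction i using Nat.strong_induction_on with
  | _ i ih =>
    obtain rfl | hi2 := hi.eq_or_lt
    · exact pdRow_one
    obtain ⟨m, b, hb, rfl⟩ : ∃ m b, b ≤ 1 ∧ i = 2 * m + b := ⟨i / 2, i % 2, by omega, by omega⟩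
    have hm : 1 ≤ m := by omega
    rw [digitMatProd_two_mul_add _ _ hb (by omega), ← Matrix.mul_assoc, ← ih m (by omega) hm]
    obtain rfl | rfl : b = 0 ∨ b = 1 := by omega
    · exact pdRow_two_mul hm
    · exact pdRow_two_mul_add_one hm

theorem pd_perFn_linear_representation :
    ∀ i : ℕ, 1 ≤ i →
      (perFn pd i : ℤ) =
        ((!![1, 0, 0, 0, 0, 0] : Matrix (Fin 1) (Fin 6) ℤ) *
            digitMatProd
              !![1, 0, 0, 0, 0, 0;
                 0, 0, 0, 1, 0, 1;
                 0, 0, 0, 0, 0, 2;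
                 0, 0, 0, 0, 1, 0;
                 0, 0, 0, 1, 0, 1;
                 0, 0, 0, 0, 0, 0]
              !![0, 1, 1, 0, 0, 0;
                 0, 0, 0, 0, 1, 0;
                 0, 0, 0, 0, 0, 0;
                 0, 1, 1, 0, 0, 0;
                 0, 1, 1, 0, 0, 0;
                 0, 0, 2, 0, 0, 0] i *
            (!![1; 1; 1; 1; 1; 1] : Matrix (Fin 6) (Fin 1) ℤ)) 0 0 := by
  intro i hi
  rw [← pdRow_mul_pdW hi, pdRow_eq_pdV_mul_digitMatProd hi]
  rfl
end

section
/- If w is a recurrent infinite word (i.e., every finite factor of w occurs infinitely often in w), then for every index i the periodicity function value p_w(i) is finite; that is, the set of integers n ≥ 1 such that either (n ≤ i and w_{i+k} = w_{i−n+k} for all 0 ≤ k < n) or (n > i and w_k = w_{n+k} for all 0 ≤ k < i) is nonempty. -/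
open Finset Filter Asymptotics

/-- An infinite word is recurrent if every finite factor occurs infinitely often. -/
def IsRecurrent {α : Type*} (w : ℕ → α) : Prop :=
  ∀ i m N : ℕ, ∃ j, N ≤ j ∧ ∀ k < m, w (j + k) = w (i + k)

theorem perFn_finite_of_recurrent {α : Type*} (w : ℕ → α) (hw : IsRecurrent w) (i : ℕ) :
    {n : ℕ | IsLocalPeriodAt w i n}.Nonempty := by
  obtain ⟨j, hj, hk⟩ := hw 0 i (i + 1)
  exact ⟨j, le_trans (Nat.succ_le_succ (Nat.zero_le i)) hj,
    Or.inr ⟨Nat.lt_of_succ_le hj, fun k hki => by simpa using (hk k hki).symm⟩⟩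
end
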